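/- Let A be an atomic concept and R a role name, and define concepts C_0 = A and C_{n+1} = A ⊓ ∃R.C_n. Then for every natural number n, C_n is not subsumed by C_{n+1} with respect to the empty TBox; that is, for every n there exists a DL interpretation I such that C_n^I is not contained in C_{n+1}^I. Consequently, no C_n is a most specific concept of the individual a in the ontology with empty TBox and ABox {A(a), R(a,a)}. -/

import Mathlib

/-- A role is either a role name or the inverse of a role name. -/
inductive DLRole (R : Type) : Type where
  | atomic : R → DLRole R
  | inv : R → DLRole R

/-- The inverse of a role. -/
def DLRole.invert {R : Type} : DLRole R → DLRole R
  | .atomic r => .inv r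
  | .inv r => .atomic r

/-- DL concepts over atomic concepts `C`, role names `R`, individual names `Ind`. -/
inductive DLConcept (C R Ind : Type) : Type where
  | atomic : C → DLConcept C R Ind
  | nominal : Ind → DLConcept C R Ind
  | top : DLConcept C R Ind
  | bot : DLConcept C R Ind
  | neg : DLConcept C R Ind → DLConcept C R Ind
  | conj : DLConcept C R Ind → DLConcept C R Ind → DLConcept C R Ind
  | disj : DLConcept C R Ind → DLConcept C R Ind → DLConcept C R Ind
  | ex : DLRole R → DLConcept C R Ind → DLConcept C R Ind
  | all : DLRole R → DLConcept C R Ind → DLConcept C R Ind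

/-- A DL interpretation. -/
structure DLInterp (C R Ind : Type) : Type 1 where
  Δ : Type
  nonempty : Nonempty Δ
  conceptI : C → Set Δ
  roleI : R → Set (Δ × Δ)
  indI : Ind → Δ

/-- Interpretation of a (possibly inverse) role. -/
def DLInterp.role {C R Ind : Type} (I : DLInterp C R Ind) : DLRole R → Set (I.Δ × I.Δ)
  | .atomic r => I.roleI r
  | .inv r => {p | (p.2, p.1) ∈ I.roleI r}

/-- Interpretation of a concept. -/
def DLInterp.concept {C R Ind : Type} (I : DLInterp C R Ind) : DLConcept C R Ind → Set I.Δ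
  | .atomic A => I.conceptI A
  | .nominal o => {I.indI o}
  | .top => Set.univ
  | .bot => ∅
  | .neg c => (I.concept c)ᶜ
  | .conj c d => I.concept c ∩ I.concept d
  | .disj c d => I.concept c ∪ I.concept d
  | .ex r c => {x | ∃ y, (x, y) ∈ I.role r ∧ y ∈ I.concept c}
  | .all r c => {x | ∀ y, (x, y) ∈ I.role r → y ∈ I.concept c}

/-- TBox axioms: GCIs, role inclusions, transitivity declarations. -/
inductive DLAxiom (C R Ind : Type) : Type where
  | gci : DLConcept C R Ind → DLConcept C R Ind → DLAxiom C R Ind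
  | roleIncl : DLRole R → DLRole R → DLAxiom C R Ind
  | transRole : R → DLAxiom C R Ind

/-- ABox assertions. -/
inductive DLAssertion (C R Ind : Type) : Type where
  | conceptAssert : DLConcept C R Ind → Ind → DLAssertion C R Ind
  | roleAssert : DLRole R → Ind → Ind → DLAssertion C R Ind

/-- Satisfaction of a TBox axiom. -/
def DLInterp.satAxiom {C R Ind : Type} (I : DLInterp C R Ind) : DLAxiom C R Ind → Prop
  | .gci c d => I.concept c ⊆ I.concept d
  | .roleIncl r s => I.role r ⊆ I.role s
  | .transRole r => ∀ x y z : I.Δ, (x, y) ∈ I.roleI r → (y, z) ∈ I.roleI r → (x, z) ∈ I.roleI r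

/-- Satisfaction of an ABox assertion. -/
def DLInterp.satAssertion {C R Ind : Type} (I : DLInterp C R Ind) : DLAssertion C R Ind → Prop
  | .conceptAssert c a => I.indI a ∈ I.concept c
  | .roleAssert r a b => (I.indI a, I.indI b) ∈ I.role r

/-- An ontology: a TBox and an ABox. -/
structure DLOntology (C R Ind : Type) : Type where
  tbox : Set (DLAxiom C R Ind)
  abox : Set (DLAssertion C R Ind)

/-- `I` is a model of `K`. -/
def DLInterp.isModel {C R Ind : Type} (I : DLInterp C R Ind) (K : DLOntology C R Ind) : Prop :=
  (∀ ax ∈ K.tbox, I.satAxiom ax) ∧ (∀ asr ∈ K.abox, I.satAssertion asr)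

/-- `K ⊨ α` for an assertion `α`. -/
def DLOntology.entails {C R Ind : Type} (K : DLOntology C R Ind) (α : DLAssertion C R Ind) : Prop :=
  ∀ I : DLInterp C R Ind, I.isModel K → I.satAssertion α

/-- `K ⊨ c ⊑ d`. -/
def DLOntology.entailsGCI {C R Ind : Type} (K : DLOntology C R Ind) (c d : DLConcept C R Ind) : Prop :=
  ∀ I : DLInterp C R Ind, I.isModel K → I.concept c ⊆ I.concept d

/-- `T ⊨ c ⊑ d` for a TBox `T`. -/
def tboxEntailsGCI {C R Ind : Type} (T : Set (DLAxiom C R Ind)) (c d : DLConcept C R Ind) : Prop :=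
  ∀ I : DLInterp C R Ind, (∀ ax ∈ T, I.satAxiom ax) → I.concept c ⊆ I.concept d

/-- `c` is a most specific concept of the individual `a` w.r.t. `K = (T, A)`:
`K ⊨ c(a)` and for every concept `d` with `K ⊨ d(a)`, `T ⊨ c ⊑ d`. -/
def isMSC {C R Ind : Type} (K : DLOntology C R Ind) (a : Ind) (c : DLConcept C R Ind) : Prop :=
  K.entails (.conceptAssert c a) ∧
    ∀ d : DLConcept C R Ind, K.entails (.conceptAssert d a) → tboxEntailsGCI K.tbox c d

/-- The chain of concepts `C₀ = A`, `Cₙ₊₁ = A ⊓ ∃R.Cₙ`. -/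
def chainConcept {C R Ind : Type} (A : C) (r : R) : ℕ → DLConcept C R Ind
  | 0 => .atomic A
  | n + 1 => .conj (.atomic A) (.ex (.atomic r) (chainConcept A r n))

/-
On the path `0 → 1 → 2 → ⋯` with `A` true exactly on `{0, …, n}`, a point `x` satisfies `Cₘ`
iff `x + m ≤ n`; so `0` is in `Cₙ` but not in `Cₙ₊₁`. On the other hand the `R`-loop at `a`
makes `a` an instance of every `Cₘ` in every model of `{A(a), R(a,a)}`, so an MSC `Cₙ` would
have to be subsumed by `Cₙ₊₁`.
-/

lemma mem_concept_chainConcept_of_loop {C R Ind : Type} (I : DLInterp C R Ind) (A : C) (r : R)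
    {x : I.Δ} (hA : x ∈ I.conceptI A) (hr : (x, x) ∈ I.roleI r) (m : ℕ) :
    x ∈ I.concept (chainConcept A r m) := by
  induction m with
  | zero => exact hA
  | succ m ih => exact ⟨hA, x, hr, ih⟩

lemma entails_chainConcept_of_loop {C R Ind : Type} (A : C) (r : R) (a : Ind) (m : ℕ) :
    (DLOntology.mk ∅
      {DLAssertion.conceptAssert (.atomic A) a,
        DLAssertion.roleAssert (.atomic r) a a}).entails
      (.conceptAssert (chainConcept A r m) a) := fun I hI =>
  mem_concept_chainConcept_of_loop I A r (hI.2 _ (Or.inl rfl)) (hI.2 _ (Or.inr rfl)) m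

def finitePathInterp (C R Ind : Type) (n : ℕ) : DLInterp C R Ind where
  Δ := ℕ
  nonempty := ⟨0⟩
  conceptI _ := Set.Iic n
  roleI _ := {p | p.2 = p.1 + 1}
  indI _ := 0

lemma mem_finitePathInterp_chainConcept_iff {C R Ind : Type} (A : C) (r : R) (n m x : ℕ) :
    x ∈ (finitePathInterp C R Ind n).concept (chainConcept A r m) ↔ x + m ≤ n := by
  induction m generalizing x with
  | zero => exact Set.mem_Iic
  | succ m ih =>
    constructor
    · rintro ⟨-, y, hy, hyC⟩
      obtain rfl : y = x + 1 := hy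
      have := (ih _).1 hyC
      omega
    · intro h
      exact ⟨(by omega : x ≤ n), x + 1, rfl, (ih _).2 (by omega)⟩

lemma exists_not_subset_chainConcept_succ {C R Ind : Type} (A : C) (r : R) (n : ℕ) :
    ∃ I : DLInterp C R Ind,
      ¬ I.concept (chainConcept A r n) ⊆ I.concept (chainConcept A r (n + 1)) := by
  refine ⟨finitePathInterp C R Ind n, fun hsub => ?_⟩
  have hmem := hsub ((mem_finitePathInterp_chainConcept_iff A r n n 0).2 (by omega))
  have := (mem_finitePathInterp_chainConcept_iff A r n (n + 1) 0).1 hmem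
  omega

/-- no `Cₙ` is subsumed by `Cₙ₊₁` w.r.t. the empty TBox, and consequently no
`Cₙ` is a most specific concept of `a` in the ontology `(∅, {A(a), R(a,a)})`. -/
theorem chain_never_most_specific {C R Ind : Type} (A : C) (r : R) (a : Ind) :
    (∀ n : ℕ, ∃ I : DLInterp C R Ind,
        ¬ I.concept (chainConcept A r n) ⊆ I.concept (chainConcept A r (n + 1))) ∧
    (∀ n : ℕ, ¬ isMSC
        (DLOntology.mk ∅
          {DLAssertion.conceptAssert (.atomic A) a,
            DLAssertion.roleAssert (.atomic r) a a})
        a (chainConcept A r n)) := by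
  refine ⟨exists_not_subset_chainConcept_succ A r, fun n hmsc => ?_⟩
  obtain ⟨I, hI⟩ := exists_not_subset_chainConcept_succ (Ind := Ind) A r n
  exact hI (hmsc.2 _ (entails_chainConcept_of_loop A r a (n + 1)) I (by simp))
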